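/- Let Y₁, …, Y_k be n×n real symmetric positive definite matrices, let X* be a symmetric positive definite matrix satisfying the mean equation m(X*,Y₁)·Y₁ + … + m(X*,Y_k)·Y_k + (o(X*,Y₁) + … + o(X*,Y_k))·X* = 0, and let A be an invertible n×n real matrix. Then A X* Aᵀ satisfies the mean equation for the data (A Y₁ Aᵀ, …, A Y_k Aᵀ); that is, the inductive Thompson mean is affine-equivariant: M(A Y₁ Aᵀ, …, A Y_k Aᵀ) = A M(Y₁,…,Y_k) Aᵀ. -/

import Mathlib

open Matrix Filter Topology
open scoped Classical

noncomputable section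

/-- Square real matrices. -/
abbrev Mat (n : ℕ) := Matrix (Fin n) (Fin n) ℝ

/-- The largest element of the real spectrum of a matrix. -/
noncomputable def lamMax {n : ℕ} (A : Mat n) : ℝ := sSup (spectrum ℝ A)

/-- The smallest element of the real spectrum of a matrix. -/
noncomputable def lamMin {n : ℕ} (A : Mat n) : ℝ := sInf (spectrum ℝ A)

/-- The positive semidefinite square root (junk value `0` if not PSD). -/
noncomputable def sqrtM {n : ℕ} (X : Mat n) : Mat n :=
  if h : X.PosSemidef then
    (h.1.eigenvectorUnitary : Mat n) * Matrix.diagonal (fun i => Real.sqrt (h.1.eigenvalues i)) *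
      (star (h.1.eigenvectorUnitary : Mat n))
  else 0

/-- `X^{-1/2}` for a positive definite matrix. -/
noncomputable def invSqrt {n : ℕ} (X : Mat n) : Mat n := (sqrtM X)⁻¹

/-- `λ_max(X^{-1/2} Y X^{-1/2})`, the largest generalized eigenvalue of the pair `(Y, X)`. -/
noncomputable def gmax {n : ℕ} (X Y : Mat n) : ℝ := lamMax (invSqrt X * Y * invSqrt X)

/-- `λ_min(X^{-1/2} Y X^{-1/2})`, the smallest generalized eigenvalue of the pair `(Y, X)`. -/
noncomputable def gmin {n : ℕ} (X Y : Mat n) : ℝ := lamMin (invSqrt X * Y * invSqrt X)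

/-- The Thompson geodesic `X *_t Y`. -/
noncomputable def thompson {n : ℕ} (X Y : Mat n) (t : ℝ) : Mat n :=
  if gmin X Y = gmax X Y then (gmin X Y) ^ t • X
  else ((gmax X Y ^ t - gmin X Y ^ t) / (gmax X Y - gmin X Y)) • Y +
    ((gmax X Y * gmin X Y ^ t - gmin X Y * gmax X Y ^ t) / (gmax X Y - gmin X Y)) • X

/-- The Thompson part metric on positive definite matrices. -/
noncomputable def dT {n : ℕ} (X Y : Mat n) : ℝ :=
  max (Real.log (gmax X Y)) (Real.log (gmax Y X))

/-- Hilbert's projective metric on positive definite matrices. -/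
noncomputable def dH {n : ℕ} (X Y : Mat n) : ℝ :=
  Real.log (gmax X Y / gmin X Y)

/-- The coefficient `m(X,Y) = dφ/dt(0)` of the Thompson geodesic. -/
noncomputable def mCoef {n : ℕ} (X Y : Mat n) : ℝ :=
  if gmax X Y = gmin X Y then 1 / gmin X Y
  else (Real.log (gmax X Y) - Real.log (gmin X Y)) / (gmax X Y - gmin X Y)

/-- The coefficient `o(X,Y) = dψ/dt(0)` of the Thompson geodesic. -/
noncomputable def oCoef {n : ℕ} (X Y : Mat n) : ℝ :=
  if gmax X Y = gmin X Y then Real.log (gmin X Y) - 1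
  else (gmax X Y * Real.log (gmin X Y) - gmin X Y * Real.log (gmax X Y)) /
    (gmax X Y - gmin X Y)

/-- The mean equation `∑ⱼ m(X*,Yⱼ)·Yⱼ + (∑ⱼ o(X*,Yⱼ))·X* = 0`. -/
def MeanEq {n k : ℕ} (Y : Fin k → Mat n) (Xs : Mat n) : Prop :=
  ∑ j, mCoef Xs (Y j) • Y j + (∑ j, oCoef Xs (Y j)) • Xs = 0

/-- The Frobenius norm of a matrix. -/
noncomputable def frob {n : ℕ} (A : Mat n) : ℝ :=
  Real.sqrt (∑ i, ∑ j, (A i j) ^ 2)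

/-- The inductive sequence of Algorithm 4.1: `indSeq hk Y X₁ i = X_{i+1}`, so that
`indSeq hk Y X₁ 0 = X₁` and `X_{i+1} = X_i *_{1/(i+1)} Y_j` with `j ≡ i (mod k)`,
`1 ≤ j ≤ k`. -/
noncomputable def indSeq {n k : ℕ} (hk : 0 < k) (Y : Fin k → Mat n) (X₁ : Mat n) :
    ℕ → Mat n
  | 0 => X₁
  | (i + 1) => thompson (indSeq hk Y X₁ i) (Y ⟨i % k, Nat.mod_lt i hk⟩)
      (1 / ((i : ℝ) + 2))

/-- The map `T_p(X) = (⋯((X *_{1/(pk+2)} Y₁) *_{1/(pk+3)} Y₂)⋯) *_{1/((p+1)k+1)} Y_k`. -/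
noncomputable def Tmap {n k : ℕ} (Y : Fin k → Mat n) (p : ℕ) (X : Mat n) : Mat n :=
  (List.finRange k).foldl
    (fun Z j => thompson Z (Y j) (1 / ((p : ℝ) * (k : ℝ) + ((j : ℕ) : ℝ) + 2))) X

/-- The spectral `t`-th power of a symmetric matrix (junk value `0` otherwise). -/
noncomputable def spdPow {n : ℕ} (A : Mat n) (t : ℝ) : Mat n :=
  if h : A.IsHermitian then
    (h.eigenvectorUnitary : Mat n) * Matrix.diagonal (fun i => h.eigenvalues i ^ t) *
      (star (h.eigenvectorUnitary : Mat n))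
  else 0

/-- The affine-invariant Riemannian geodesic `X #_t Y = X^{1/2} (X^{-1/2} Y X^{-1/2})^t X^{1/2}`. -/
noncomputable def riemann {n : ℕ} (X Y : Mat n) (t : ℝ) : Mat n :=
  sqrtM X * spdPow (invSqrt X * Y * invSqrt X) t * sqrtM X

/-! The coefficients `m(X,Y)` and `o(X,Y)` depend only on the spectrum of `X^{-1/2} Y X^{-1/2}`,
which is similar (via `X^{1/2}`) to `Y X⁻¹`. Replacing `X, Y` by `A X Aᵀ, A Y Aᵀ` turns `Y X⁻¹`
into the similar matrix `A (Y X⁻¹) A⁻¹`, so every coefficient of the mean equation is unchanged,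
and the equation itself is linear in the matrices, hence preserved by `Z ↦ A Z Aᵀ`. -/

lemma sqrtM_mul_self {n : ℕ} {X : Mat n} (hX : X.PosSemidef) : sqrtM X * sqrtM X = X := by
  rw [sqrtM, dif_pos hX]
  have hU : star (hX.1.eigenvectorUnitary : Mat n) * (hX.1.eigenvectorUnitary : Mat n) = 1 :=
    Unitary.star_mul_self_of_mem hX.1.eigenvectorUnitary.prop
  have hD : Matrix.diagonal (fun i => Real.sqrt (hX.1.eigenvalues i)) *
      Matrix.diagonal (fun i => Real.sqrt (hX.1.eigenvalues i)) =
      Matrix.diagonal (RCLike.ofReal ∘ hX.1.eigenvalues) := by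
    rw [Matrix.diagonal_mul_diagonal]
    congr 1; funext i
    simp [Real.mul_self_sqrt (hX.eigenvalues_nonneg i)]
  conv_rhs => rw [hX.1.spectral_theorem]
  rw [Unitary.conjStarAlgAut_apply, ← hD]
  simp only [Matrix.mul_assoc]
  rw [← Matrix.mul_assoc (star _) (hX.1.eigenvectorUnitary : Mat n), hU, Matrix.one_mul]

lemma isUnit_sqrtM {n : ℕ} {X : Mat n} (hX : X.PosSemidef) (hXu : IsUnit X) :
    IsUnit (sqrtM X) :=
  isUnit_of_mul_isUnit_left (y := sqrtM X) (by rwa [sqrtM_mul_self hX])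

lemma spectrum_invSqrt_mul_mul_invSqrt {n : ℕ} {X : Mat n} (hX : X.PosSemidef)
    (hXu : IsUnit X) (Y : Mat n) :
    spectrum ℝ (invSqrt X * Y * invSqrt X) = spectrum ℝ (Y * X⁻¹) := by
  obtain ⟨u, hu⟩ := isUnit_sqrtM hX hXu
  have hinv : invSqrt X = ↑u⁻¹ := by rw [invSqrt, ← hu, Matrix.coe_units_inv]
  have hXinv : X⁻¹ = ↑u⁻¹ * ↑u⁻¹ := by
    rw [← sqrtM_mul_self hX, ← hu, Matrix.mul_inv_rev, Matrix.coe_units_inv]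
  rw [← spectrum.units_conjugate (u := u) (a := invSqrt X * Y * invSqrt X), hinv, hXinv]
  simp [mul_assoc]

lemma spectrum_mul_mul_mul_inv_mul_mul {n : ℕ} (X Y : Mat n) {A B : Mat n} (hA : IsUnit A)
    (hB : IsUnit B) : spectrum ℝ (A * Y * B * (A * X * B)⁻¹) = spectrum ℝ (Y * X⁻¹) := by
  obtain ⟨u, rfl⟩ := hA
  obtain ⟨v, rfl⟩ := hB
  rw [← spectrum.units_conjugate (u := u) (a := Y * X⁻¹)]
  simp [Matrix.mul_inv_rev, Matrix.coe_units_inv, mul_assoc]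

section Congruence

variable {n : ℕ} {X : Mat n} (hX : X.PosSemidef) (hXu : IsUnit X) (Y : Mat n) {A : Mat n}
  (hA : IsUnit A)
include hX hXu hA

lemma spectrum_invSqrt_mul_mul_transpose :
    spectrum ℝ (invSqrt (A * X * Aᵀ) * (A * Y * Aᵀ) * invSqrt (A * X * Aᵀ)) =
      spectrum ℝ (invSqrt X * Y * invSqrt X) := by
  have hAXA : (A * X * Aᵀ).PosSemidef := by
    simpa using hX.mul_mul_conjTranspose_same A
  have hAXAu : IsUnit (A * X * Aᵀ) := (hA.mul hXu).mul ((isUnit_transpose A).mpr hA)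
  rw [spectrum_invSqrt_mul_mul_invSqrt hX hXu, spectrum_invSqrt_mul_mul_invSqrt hAXA hAXAu,
    spectrum_mul_mul_mul_inv_mul_mul X Y hA ((isUnit_transpose A).mpr hA)]

lemma gmax_mul_mul_transpose : gmax (A * X * Aᵀ) (A * Y * Aᵀ) = gmax X Y :=
  congrArg sSup (spectrum_invSqrt_mul_mul_transpose hX hXu Y hA)

lemma gmin_mul_mul_transpose : gmin (A * X * Aᵀ) (A * Y * Aᵀ) = gmin X Y :=
  congrArg sInf (spectrum_invSqrt_mul_mul_transpose hX hXu Y hA)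

lemma mCoef_mul_mul_transpose : mCoef (A * X * Aᵀ) (A * Y * Aᵀ) = mCoef X Y := by
  rw [mCoef, mCoef, gmax_mul_mul_transpose hX hXu Y hA, gmin_mul_mul_transpose hX hXu Y hA]

lemma oCoef_mul_mul_transpose : oCoef (A * X * Aᵀ) (A * Y * Aᵀ) = oCoef X Y := by
  rw [oCoef, oCoef, gmax_mul_mul_transpose hX hXu Y hA, gmin_mul_mul_transpose hX hXu Y hA]

end Congruence

theorem inductive_mean_affine_equivariant_general {n k : ℕ} (Y : Fin k → Mat n)
    (Xs : Mat n) (hXs : Xs.PosDef) (hmean : MeanEq Y Xs)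
    (A : Mat n) (hA : IsUnit A) :
    MeanEq (fun j => A * Y j * Aᵀ) (A * Xs * Aᵀ) := by
  have hm := fun j => mCoef_mul_mul_transpose hXs.posSemidef hXs.isUnit (Y j) hA
  have ho := fun j => oCoef_mul_mul_transpose hXs.posSemidef hXs.isUnit (Y j) hA
  unfold MeanEq at hmean ⊢
  calc ∑ j, mCoef (A * Xs * Aᵀ) (A * Y j * Aᵀ) • (A * Y j * Aᵀ)
        + (∑ j, oCoef (A * Xs * Aᵀ) (A * Y j * Aᵀ)) • (A * Xs * Aᵀ)
      = A * (∑ j, mCoef Xs (Y j) • Y j + (∑ j, oCoef Xs (Y j)) • Xs) * Aᵀ := by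
        simp only [hm, ho, Matrix.mul_add, Matrix.add_mul, Matrix.mul_sum, Matrix.sum_mul,
          Matrix.mul_smul, Matrix.smul_mul]
    _ = 0 := by rw [hmean, Matrix.mul_zero, Matrix.zero_mul]

/-- affine-equivariance of the inductive Thompson mean: if `X*` solves the
mean equation for `(Y₁,…,Y_k)` and `A` is invertible, then `A X* Aᵀ` solves the mean
equation for `(A Y₁ Aᵀ,…,A Y_k Aᵀ)`. -/
theorem inductive_mean_affine_equivariant {n k : ℕ} (Y : Fin k → Mat n)
    (hY : ∀ j, (Y j).PosDef) (Xs : Mat n) (hXs : Xs.PosDef) (hmean : MeanEq Y Xs)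
    (A : Mat n) (hA : IsUnit A) :
    MeanEq (fun j => A * Y j * Aᵀ) (A * Xs * Aᵀ) :=
  inductive_mean_affine_equivariant_general Y Xs hXs hmean A hA
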